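/- Let t > 0, λ ∈ ℝ, and let (ξ_N) be eigenvalues with orthonormal eigenfunctions (χ_N) of H = L + Q (Q bounded by M in operator norm, H with compact resolvent so eigenfunctions form an orthonormal basis). Let v be a unit eigenvector of L with Lv = λv, and suppose the number of N with ξ_N ∈ [λ - t/2, λ + t/2] is at most K, and ‖Qv‖²·(2/t)² ≤ 1/2. Then there exists N with |ξ_N - λ| ≤ t/2 and |⟨χ_N, v⟩|² ≥ 1/(2K). -/

import Mathlib

/-!
Pairing the eigenvalue equation `H χ_N = ξ_N χ_N` with `v` and using the symmetry of `L` and `Q`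
gives `⟨χ_N, Q v⟩ = (ξ_N - λ) ⟨χ_N, v⟩`. Hence, off the window `|ξ_N - λ| ≤ t/2`, the coefficients
of `v` are dominated by those of `(2/t) Q v`, whose total mass is at most `1/2` by Parseval. So
the window carries mass at least `1/2` of `‖v‖² = 1`, spread over at most `K` indices, and one of
them carries at least `1/(2K)`.
-/

open scoped RealInnerProductSpace

theorem Finset.exists_div_le_of_le_sum {ι : Type*} {s : Finset ι} {f : ι → ℝ} {a : ℝ} {K : ℕ}
    (ha : 0 < a) (hs : a ≤ ∑ i ∈ s, f i) (hK : s.card ≤ K) : ∃ i ∈ s, a / K ≤ f i := by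
  have hne : s.Nonempty := by
    rw [Finset.nonempty_iff_ne_empty]
    rintro rfl
    simp only [Finset.sum_empty] at hs
    linarith
  have hKpos : (0 : ℝ) < K := by exact_mod_cast hne.card_pos.trans_le hK
  refine Finset.exists_le_of_sum_le hne ?_
  calc ∑ _i ∈ s, a / K = s.card * (a / K) := by simp
    _ ≤ K * (a / K) := by gcongr
    _ = a := mul_div_cancel₀ a hKpos.ne'
    _ ≤ ∑ i ∈ s, f i := hs

section HilbertBasis

variable {ι E : Type*} [NormedAddCommGroup E] [InnerProductSpace ℝ E]

theorem HilbertBasis.hasSum_inner_sq (b : HilbertBasis ι ℝ E) (x : E) :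
    HasSum (fun i => ⟪b i, x⟫ ^ 2) (‖x‖ ^ 2) := by
  simpa only [sq, real_inner_comm x, real_inner_self_eq_norm_sq] using b.hasSum_inner_mul_inner x x

theorem HilbertBasis.norm_sq_sub_norm_sq_le_tsum_inner_sq (b : HilbertBasis ι ℝ E) {x y : E}
    {S : Set ι} (hdom : ∀ i ∉ S, ⟪b i, x⟫ ^ 2 ≤ ⟪b i, y⟫ ^ 2) :
    ‖x‖ ^ 2 - ‖y‖ ^ 2 ≤ ∑' i : S, ⟪b i, x⟫ ^ 2 := by
  have hx := b.hasSum_inner_sq x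
  have hy := b.hasSum_inner_sq y
  have hsplit := (hx.summable.subtype S).tsum_add_tsum_compl (hx.summable.subtype Sᶜ)
  have htail : ∑' i : ↑Sᶜ, ⟪b i, x⟫ ^ 2 ≤ ‖y‖ ^ 2 :=
    calc ∑' i : ↑Sᶜ, ⟪b i, x⟫ ^ 2 ≤ ∑' i : ↑Sᶜ, ⟪b i, y⟫ ^ 2 :=
          Summable.tsum_le_tsum (fun i => hdom i i.2) (hx.summable.subtype _)
            (hy.summable.subtype _)
      _ ≤ ∑' i, ⟪b i, y⟫ ^ 2 :=
          Summable.tsum_subtype_le _ _ (fun _ => sq_nonneg _) hy.summable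
      _ = ‖y‖ ^ 2 := hy.tsum_eq
  rw [hx.tsum_eq] at hsplit
  linarith

end HilbertBasis

theorem LinearMap.IsSymmetric.inner_apply_eq_sub_mul_inner {E : Type*} [NormedAddCommGroup E]
    [InnerProductSpace ℝ E] {L Q : E →ₗ[ℝ] E} (hL : L.IsSymmetric) (hQ : Q.IsSymmetric)
    {e v : E} {ξ lam : ℝ} (he : (L + Q) e = ξ • e) (hv : L v = lam • v) :
    ⟪e, Q v⟫ = (ξ - lam) * ⟪e, v⟫ :=
  calc ⟪e, Q v⟫ = ⟪(L + Q) e, v⟫ - ⟪L e, v⟫ := by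
        rw [← hQ, LinearMap.add_apply, inner_add_left, add_sub_cancel_left]
    _ = (ξ - lam) * ⟪e, v⟫ := by
        rw [he, hL, hv, real_inner_smul_left, real_inner_smul_right, sub_mul]

theorem stmt_19_general {E : Type*} [NormedAddCommGroup E] [InnerProductSpace ℝ E] [CompleteSpace E]
    (H L Q : E →ₗ[ℝ] E) (hHLQ : H = L + Q)
    (hLsym : ∀ u v : E, (inner ℝ (L u) v : ℝ) = inner ℝ u (L v))
    (hQsym : ∀ u v : E, (inner ℝ (Q u) v : ℝ) = inner ℝ u (Q v))
    (b : HilbertBasis ℕ ℝ E) (ξ : ℕ → ℝ) (hH : ∀ N, H (b N) = ξ N • b N)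
    (v : E) (lam : ℝ) (hv : ‖v‖ = 1) (hLv : L v = lam • v)
    (t : ℝ) (ht : 0 < t) (K : ℕ)
    (hfin : {N : ℕ | |ξ N - lam| ≤ t / 2}.Finite)
    (hcard : {N : ℕ | |ξ N - lam| ≤ t / 2}.ncard ≤ K)
    (hQv : ‖Q v‖ ^ 2 * (2 / t) ^ 2 ≤ 1 / 2) :
    ∃ N : ℕ, |ξ N - lam| ≤ t / 2 ∧ 1 / (2 * K) ≤ (inner ℝ (b N) v : ℝ) ^ 2 := by
  subst hHLQ
  have hdom : ∀ N ∉ {N : ℕ | |ξ N - lam| ≤ t / 2}, ⟪b N, v⟫ ^ 2 ≤ ⟪b N, (2 / t) • Q v⟫ ^ 2 := by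
    intro N hN
    have hfar : 1 ≤ (2 / t * (ξ N - lam)) ^ 2 := by
      rw [← sq_abs, abs_mul, abs_of_pos (by positivity : 0 < 2 / t)]
      have : t / 2 < |ξ N - lam| := not_le.mp hN
      have : 1 < 2 / t * |ξ N - lam| := by rw [div_mul_eq_mul_div, lt_div_iff₀ ht]; linarith
      nlinarith
    rw [real_inner_smul_right, LinearMap.IsSymmetric.inner_apply_eq_sub_mul_inner hLsym hQsym (hH N)
      hLv, ← mul_assoc, mul_pow]
    exact le_mul_of_one_le_left (sq_nonneg _) hfar
  have hmass : 1 / 2 ≤ ∑ N ∈ hfin.toFinset, ⟪b N, v⟫ ^ 2 := by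
    have := b.norm_sq_sub_norm_sq_le_tsum_inner_sq hdom
    rw [norm_smul, mul_pow, Real.norm_eq_abs, sq_abs, hv, ← hfin.coe_toFinset,
      Finset.tsum_subtype' _ fun N => ⟪b N, v⟫ ^ 2] at this
    linarith
  obtain ⟨N, hN, hle⟩ := Finset.exists_div_le_of_le_sum (by norm_num) hmass
    (Set.ncard_eq_toFinset_card _ hfin ▸ hcard)
  exact ⟨N, hfin.mem_toFinset.mp hN, by rwa [div_div] at hle⟩

theorem stmt_19 {E : Type*} [NormedAddCommGroup E] [InnerProductSpace ℝ E] [CompleteSpace E]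
    (H L Q : E →ₗ[ℝ] E) (hHLQ : H = L + Q)
    (hLsym : ∀ u v : E, (inner ℝ (L u) v : ℝ) = inner ℝ u (L v))
    (hQsym : ∀ u v : E, (inner ℝ (Q u) v : ℝ) = inner ℝ u (Q v))
    (b : HilbertBasis ℕ ℝ E) (ξ : ℕ → ℝ) (hH : ∀ N, H (b N) = ξ N • b N)
    (v : E) (lam : ℝ) (hv : ‖v‖ = 1) (hLv : L v = lam • v)
    (t : ℝ) (ht : 0 < t) (K : ℕ) (hK : 1 ≤ K)
    (hfin : {N : ℕ | |ξ N - lam| ≤ t / 2}.Finite)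
    (hcard : {N : ℕ | |ξ N - lam| ≤ t / 2}.ncard ≤ K)
    (hQv : ‖Q v‖ ^ 2 * (2 / t) ^ 2 ≤ 1 / 2) :
    ∃ N : ℕ, |ξ N - lam| ≤ t / 2 ∧ 1 / (2 * K) ≤ (inner ℝ (b N) v : ℝ) ^ 2 :=
  stmt_19_general H L Q hHLQ hLsym hQsym b ξ hH v lam hv hLv t ht K hfin hcard hQv
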